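/- For s = p + 1 + n/2 with integer p ≥ 0, and φ ∈ M with ∫₁^∞ dr/(r φ²(r)) < ∞, the integral ∫_{ℝⁿ}∫_ℝ (1+|ξ|²+|η|)^{p−s} φ^{-2}((1+|ξ|²+|η|)^{1/2}) dξ dη is finite; equivalently, after passing to the variable r = (1+|ξ|²+|η|)^{1/2} the integral reduces up to constants to ∫₁^∞ dr/(r φ²(r)). -/

import Mathlib

open Filter Topology Set MeasureTheory
open scoped ENNReal

def SlowlyVarying (φ : ℝ → ℝ) : Prop :=
  ∀ l : ℝ, 0 < l → Tendsto (fun r => φ (l * r) / φ r) atTop (𝓝 1)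

def MemM (φ : ℝ → ℝ) : Prop :=
  Measurable φ ∧ (∀ r, 1 ≤ r → 0 < φ r) ∧
  (∀ c : ℝ, 1 < c → ∃ m > 0, ∃ M : ℝ, ∀ r ∈ Icc (1:ℝ) c, m ≤ φ r ∧ φ r ≤ M) ∧
  SlowlyVarying φ

noncomputable def wt (n : ℕ) (s : ℝ) (φ : ℝ → ℝ)
    (q : EuclideanSpace ℝ (Fin n) × ℝ) : ℝ :=
  (1 + ‖q.1‖ ^ 2 + |q.2|) ^ s * (φ ((1 + ‖q.1‖ ^ 2 + |q.2|) ^ ((1:ℝ)/2))) ^ 2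
/-! With `A = 1 + ‖ξ‖² + |η|` the integrand is `g A`, where `g t = t^(-1-n/2) φ(√t)^(-2)`.
Integrating out `η` gives `2 ∫_{1+‖ξ‖²}^∞ g`, and by Tonelli the `ξ`-integral becomes
`∫_1^∞ g(t) |{ξ : 1 + ‖ξ‖² < t}| dt`; this set lies in the ball of radius `√t`, of measure
`C t^(n/2)`. What is left is `∫_1^∞ dt / (t φ(√t)²) = 2 ∫_1^∞ dr / (r φ(r)²)`, by `t = r²`. -/

open Metric Module

theorem lintegral_comp_abs (f : ℝ → ℝ≥0∞) :
    ∫⁻ x, f |x| = 2 * ∫⁻ x in Ioi 0, f x := by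
  have h_pos : ∫⁻ x in Ioi 0, f |x| = ∫⁻ x in Ioi 0, f x :=
    setLIntegral_congr_fun measurableSet_Ioi fun x hx => by rw [abs_of_pos hx]
  have h_neg : ∫⁻ x in Iic 0, f |x| = ∫⁻ x in Ioi 0, f x := by
    rw [setLIntegral_congr Iio_ae_eq_Iic.symm, ← show Neg.neg '' Ioi (0 : ℝ) = Iio 0 by simp,
      ← (Measure.measurePreserving_neg volume).setLIntegral_comp_emb
        (Homeomorph.neg ℝ).measurableEmbedding]
    simpa only [abs_neg] using h_pos
  rw [← lintegral_add_compl _ measurableSet_Ioi, compl_Ioi, h_pos, h_neg, two_mul]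

theorem lintegral_comp_add_abs (f : ℝ → ℝ≥0∞) (b : ℝ) :
    ∫⁻ x, f (b + |x|) = 2 * ∫⁻ t in Ioi b, f t := by
  rw [lintegral_comp_abs (fun x => f (b + x)),
    (measurePreserving_add_left volume b).setLIntegral_comp_emb
      (measurableEmbedding_addLeft b), image_const_add_Ioi, add_zero]

theorem lintegral_setLIntegral_Ioi {α : Type*} [MeasurableSpace α] (μ : Measure α) [SFinite μ]
    {f : α → ℝ} {g : ℝ → ℝ≥0∞} {c : ℝ} (hf : Measurable f) (hg : Measurable g)
    (hc : ∀ x, c ≤ f x) :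
    ∫⁻ x, (∫⁻ t in Ioi (f x), g t) ∂μ = ∫⁻ t in Ioi c, g t * μ {x | f x < t} := by
  have h_region : MeasurableSet {z : α × ℝ | f z.1 < z.2} :=
    measurableSet_lt (hf.comp measurable_fst) measurable_snd
  have h_inner : ∀ x, ∫⁻ t in Ioi (f x), g t = ∫⁻ t in Ioi c, (Ioi (f x)).indicator g t :=
    fun x => by
      rw [setLIntegral_indicator measurableSet_Ioi, inter_eq_left.2 (Ioi_subset_Ioi (hc x))]
  simp_rw [h_inner]
  rw [lintegral_lintegral_swap (f := fun x t => (Ioi (f x)).indicator g t)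
    ((hg.comp measurable_snd).indicator h_region).aemeasurable]
  refine lintegral_congr fun t => ?_
  rw [← lintegral_indicator_const (measurableSet_lt hf measurable_const)]
  rfl

section HaarMeasure

variable {E : Type*} [NormedAddCommGroup E] [NormedSpace ℝ E] [MeasurableSpace E] [BorelSpace E]
  [FiniteDimensional ℝ E] (μ : Measure E) [μ.IsAddHaarMeasure]

theorem measure_one_add_sq_norm_lt_le {t : ℝ} (ht : 0 < t) :
    μ {ξ | 1 + ‖ξ‖ ^ 2 < t} ≤ ENNReal.ofReal (√t ^ finrank ℝ E) * μ (ball 0 1) := by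
  rw [← Measure.addHaar_ball_of_pos μ 0 (Real.sqrt_pos.2 ht)]
  refine measure_mono fun ξ (hξ : 1 + ‖ξ‖ ^ 2 < t) => ?_
  rw [mem_ball_zero_iff, Real.lt_sqrt (norm_nonneg ξ)]
  linarith

theorem lintegral_comp_one_add_sq_norm_add_abs_le {g : ℝ → ℝ≥0∞} (hg : Measurable g) :
    ∫⁻ q, g (1 + ‖q.1‖ ^ 2 + |q.2|) ∂(μ.prod volume) ≤
      2 * μ (ball 0 1) * ∫⁻ t in Ioi 1, g t * ENNReal.ofReal (√t ^ finrank ℝ E) := by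
  calc ∫⁻ q, g (1 + ‖q.1‖ ^ 2 + |q.2|) ∂(μ.prod volume)
      = ∫⁻ ξ, (∫⁻ η, g (1 + ‖ξ‖ ^ 2 + |η|)) ∂μ := lintegral_prod _ (by fun_prop)
    _ = 2 * ∫⁻ t in Ioi 1, g t * μ {ξ | 1 + ‖ξ‖ ^ 2 < t} := by
      simp_rw [lintegral_comp_add_abs]
      rw [lintegral_const_mul' _ _ ENNReal.ofNat_ne_top,
        lintegral_setLIntegral_Ioi μ (by fun_prop) hg
          fun ξ => le_add_of_nonneg_right (sq_nonneg _)]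
    _ ≤ 2 * ∫⁻ t in Ioi 1, g t * (ENNReal.ofReal (√t ^ finrank ℝ E) * μ (ball 0 1)) := by
      gcongr 2 * ?_
      refine setLIntegral_mono' measurableSet_Ioi fun t (ht : 1 < t) => ?_
      gcongr
      exact measure_one_add_sq_norm_lt_le μ (by linarith)
    _ = 2 * μ (ball 0 1) * ∫⁻ t in Ioi 1, g t * ENNReal.ofReal (√t ^ finrank ℝ E) := by
      simp_rw [← mul_assoc]
      rw [lintegral_mul_const' _ _ measure_ball_lt_top.ne]
      ring

end HaarMeasure

theorem rpow_div_rpow_mul_sqrt_pow (p : ℝ) (n : ℕ) {t : ℝ} (ht : 0 < t) (c : ℝ) :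
    t ^ p / (t ^ (p + 1 + n / 2) * c) * √t ^ n = 1 / (t * c) := by
  have h_sqrt : √t ^ n = t ^ ((n : ℝ) / 2) := by
    rw [Real.sqrt_eq_rpow, ← Real.rpow_natCast, ← Real.rpow_mul ht.le]
    ring_nf
  rw [h_sqrt, Real.rpow_add ht, Real.rpow_add ht, Real.rpow_one]
  rcases eq_or_ne c 0 with rfl | hc
  · simp
  · field_simp

theorem setLIntegral_Ioi_one_comp_sqrt (ψ : ℝ → ℝ) :
    ∫⁻ t in Ioi 1, ENNReal.ofReal (1 / (t * ψ √t)) =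
      2 * ∫⁻ r in Ioi 1, ENNReal.ofReal (1 / (r * ψ r)) := by
  have h_image : (fun r : ℝ => r ^ 2) '' Ioi 1 = Ioi 1 := by
    ext t
    constructor
    · rintro ⟨r, hr : 1 < r, rfl⟩
      exact one_lt_pow₀ hr two_ne_zero
    · intro (ht : 1 < t)
      exact ⟨√t, Real.lt_sqrt zero_le_one |>.2 (by simpa using ht), Real.sq_sqrt (by linarith)⟩
  have h_inj : InjOn (fun r : ℝ => r ^ 2) (Ioi 1) :=
    (pow_left_strictMonoOn₀ two_ne_zero).injOn.mono fun r (hr : 1 < r) =>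
      (show (0 : ℝ) ≤ r by linarith)
  conv_lhs => rw [← h_image]
  rw [lintegral_image_eq_lintegral_abs_deriv_mul measurableSet_Ioi
      (fun r _ => (hasDerivAt_pow 2 r).hasDerivWithinAt) h_inj,
    ← lintegral_const_mul' _ _ ENNReal.ofNat_ne_top]
  refine setLIntegral_congr_fun measurableSet_Ioi fun r (hr : 1 < r) => ?_
  have hr0 : 0 < r := by linarith
  rw [Real.sqrt_sq hr0.le, ← ENNReal.ofReal_mul (abs_nonneg _), ← ENNReal.ofReal_ofNat,
    ← ENNReal.ofReal_mul zero_le_two]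
  congr 1
  rcases eq_or_ne (ψ r) 0 with hψ | hψ
  · simp [hψ]
  · rw [abs_of_pos (by positivity)]
    field_simp
    ring

theorem weight_integral_reduction_general (n : ℕ) (p : ℕ) (φ : ℝ → ℝ) (hφ : MemM φ)
    (hint : ∫⁻ r in Ioi (1:ℝ), ENNReal.ofReal (1 / (r * φ r ^ 2)) < ⊤) :
    ∫⁻ q : EuclideanSpace ℝ (Fin n) × ℝ,
      ENNReal.ofReal ((1 + ‖q.1‖ ^ 2 + |q.2|) ^ ((p : ℝ)) /
        wt n ((p : ℝ) + 1 + (n : ℝ) / 2) φ q) < ⊤ := by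
  have hφ_meas : Measurable φ := hφ.1
  set G : ℝ → ℝ≥0∞ := fun t =>
    ENNReal.ofReal (t ^ (p : ℝ) / (t ^ ((p : ℝ) + 1 + (n : ℝ) / 2) * φ √t ^ 2))
  have hG : Measurable G := by fun_prop
  calc _ = ∫⁻ q, G (1 + ‖q.1‖ ^ 2 + |q.2|)
        ∂((volume : Measure (EuclideanSpace ℝ (Fin n))).prod volume) := by
        rw [← Measure.volume_eq_prod]
        simp only [wt, G, Real.sqrt_eq_rpow]
    _ ≤ 2 * volume (ball (0 : EuclideanSpace ℝ (Fin n)) 1) *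
          ∫⁻ t in Ioi 1, G t * ENNReal.ofReal (√t ^ n) := by
        simpa only [finrank_euclideanSpace_fin] using
          lintegral_comp_one_add_sq_norm_add_abs_le
            (volume : Measure (EuclideanSpace ℝ (Fin n))) hG
    _ = 2 * volume (ball (0 : EuclideanSpace ℝ (Fin n)) 1) *
          (2 * ∫⁻ r in Ioi 1, ENNReal.ofReal (1 / (r * φ r ^ 2))) := by
        rw [← setLIntegral_Ioi_one_comp_sqrt fun r => φ r ^ 2]
        refine congrArg _ (setLIntegral_congr_fun measurableSet_Ioi fun t (ht : 1 < t) => ?_)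
        rw [← ENNReal.ofReal_mul' (by positivity), rpow_div_rpow_mul_sqrt_pow _ _ (by linarith)]
    _ < ⊤ := ENNReal.mul_lt_top (ENNReal.mul_lt_top (by norm_num) measure_ball_lt_top)
        (ENNReal.mul_lt_top (by norm_num) hint)

/-- for `s = p + 1 + n/2` and `φ ∈ M` with `∫₁^∞ dr/(r φ²(r)) < ∞`,
the integral `∫∫ (1+|ξ|²+|η|)^{p-s} φ^{-2}((1+|ξ|²+|η|)^{1/2}) dξ dη` is finite. -/
theorem weight_integral_reduction (n : ℕ) (p : ℕ) (hn : 1 ≤ n) (φ : ℝ → ℝ) (hφ : MemM φ)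
    (hint : ∫⁻ r in Ioi (1:ℝ), ENNReal.ofReal (1 / (r * φ r ^ 2)) < ⊤) :
    ∫⁻ q : EuclideanSpace ℝ (Fin n) × ℝ,
      ENNReal.ofReal ((1 + ‖q.1‖ ^ 2 + |q.2|) ^ ((p : ℝ)) /
        wt n ((p : ℝ) + 1 + (n : ℝ) / 2) φ q) < ⊤ :=
  weight_integral_reduction_general n p φ hφ hint
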